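/- arXiv:1912.12850 — 2 statements merged into one kernel-verified Lean document; each statement's English description precedes it below -/
import Mathlib

section
/- Let k, n, s be positive integers and let a_1, ..., a_k be integers with (a_i, n^s)_s = 1 for i = 1, ..., k. Then the sum of (m_1 − a_1, m_2 − a_2, ..., m_k − a_k, n^s)_s, taken over all tuples with 1 ≤ m_i ≤ n^s and (m_i, n^s)_s = 1 for each i, equals Φ_s(n^s)^k · Σ_{d | n} 1 / Φ_s(d^s)^{k−1}, where the sum on the right is over all positive divisors d of n. -/
/-- The generalized gcd of a nonnegative integer `n` at level `s`: the largest
`s`-th power `l ^ s` (with `l ≥ 1`) dividing `n`.  Applying it to `n = gcd(a, b)`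
gives the generalized gcd `(a, b)_s` of the paper. -/
def sPowGcd (s n : ℕ) : ℕ := (Nat.findGreatest (fun l => l ^ s ∣ n) n) ^ s

/-- Klee's function `Φ_s(n)`: the number of `1 ≤ m ≤ n` with `(m, n)_s = 1`. -/
def klee (s n : ℕ) : ℕ :=
  ((Finset.Icc 1 n).filter (fun m => sPowGcd s (Nat.gcd m n) = 1)).card

/-!
Write `D` for the largest integer with `D ^ s ∣ gcd(G, n ^ s)`, so that `(G, n ^ s)_s = D ^ s`.
The divisors of `D` are exactly the `e ∣ n` with `e ^ s ∣ G`, and `∑_{e ∣ D} Φ_s(e ^ s) = D ^ s`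
(Möbius inversion of `Φ_s(n ^ s) = ∑_{d ∣ n} μ(d) (n / d) ^ s`). Hence the weight of a tuple is
the sum of `Φ_s(e ^ s)` over the `e ∣ n` with `e ^ s ∣ m_i - a_i` for all `i`, and after swapping
the sums it remains to count, for each `i`, the `s`-reduced residues modulo `n ^ s` congruent to
`a_i` modulo `e ^ s`. By Möbius inversion and the Chinese remainder theorem this count is the same
for every `s`-reduced class modulo `e ^ s`; as these classes partition the `s`-reduced residues
modulo `n ^ s`, it equals `Φ_s(n ^ s) / Φ_s(e ^ s)`.
-/

open Finset ArithmeticFunction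
open scoped ArithmeticFunction.Moebius

lemma Fintype.filter_piFinset_forall {ι α : Type*} [Fintype ι] [DecidableEq ι]
    (t : ι → Finset α) (p : ι → α → Prop) [∀ i, DecidablePred (p i)]
    [DecidablePred fun m : ι → α => ∀ i, p i (m i)] :
    (Fintype.piFinset t).filter (fun m : ι → α => ∀ i, p i (m i)) =
      Fintype.piFinset fun i => (t i).filter (p i) := by
  ext m
  simp only [mem_filter, Fintype.mem_piFinset, forall_and]

lemma Finset.dvd_gcd_natAbs_iff {ι : Type*} (t : Finset ι) (f : ι → ℤ) (k : ℕ) :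
    k ∣ t.gcd (fun i => (f i).natAbs) ↔ ∀ i ∈ t, (k : ℤ) ∣ f i := by
  simp [Finset.dvd_gcd_iff, Int.natCast_dvd]

lemma IsCoprime.exists_dvd_and_dvd_sub_iff {A B : ℤ} (h : IsCoprime A B) (b : ℤ) :
    ∃ c, ∀ x, A ∣ x ∧ B ∣ x - b ↔ A * B ∣ x - c := by
  obtain ⟨u, v, huv⟩ := h
  refine ⟨b * u * A, fun x => ⟨fun ⟨hA, hB⟩ => ?_, fun hAB => ⟨?_, ?_⟩⟩⟩
  · refine IsCoprime.mul_dvd ⟨u, v, huv⟩ (dvd_sub hA (dvd_mul_left A _)) ?_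
    rw [show x - b * u * A = x - b + b * v * B by linear_combination (-b) * huv]
    exact dvd_add hB (dvd_mul_left B _)
  · rw [show x = x - b * u * A + b * u * A by ring]
    exact dvd_add ((dvd_mul_right A B).trans hAB) (dvd_mul_left A _)
  · rw [show x - b = x - b * u * A - b * v * B by linear_combination b * huv]
    exact dvd_sub ((dvd_mul_left B A).trans hAB) (dvd_mul_left B _)

lemma card_filter_Icc_dvd_sub {T M : ℕ} (hT : 0 < T) (hTM : T ∣ M) (c : ℤ) :
    #{x ∈ Icc 1 M | (T : ℤ) ∣ ↑x - c} = M / T := by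
  obtain ⟨L, rfl⟩ := hTM
  have hcast : ({x ∈ Icc 1 (T * L) | (T : ℤ) ∣ (x : ℤ) - c} : Finset ℕ).map Nat.castEmbedding =
      {y ∈ Ioc (0 : ℤ) ↑(T * L) | y ≡ c [ZMOD T]} := by
    ext y
    simp only [mem_map, mem_filter, mem_Icc, mem_Ioc, Nat.castEmbedding_apply,
      Int.modEq_iff_dvd, dvd_sub_comm (a := (T : ℤ)) (b := c)]
    constructor
    · rintro ⟨x, ⟨⟨h1, h2⟩, h⟩, rfl⟩
      exact ⟨⟨by omega, by exact_mod_cast h2⟩, h⟩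
    · rintro ⟨⟨h1, h2⟩, h⟩
      lift y to ℕ using h1.le
      exact ⟨y, ⟨⟨by omega, by exact_mod_cast h2⟩, h⟩, rfl⟩
  have hfloor : ⌊((((T * L : ℕ) : ℤ) : ℚ) - c) / ((T : ℤ) : ℚ)⌋ =
      ⌊(((0 : ℤ) : ℚ) - c) / ((T : ℤ) : ℚ)⌋ + L := by
    rw [← Int.floor_add_intCast]
    congr 1
    push_cast
    field_simp
    ring
  have h := Int.Ioc_filter_modEq_card 0 ↑(T * L) (Int.natCast_pos.2 hT) c
  rw [← hcast, card_map, hfloor] at h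
  rw [Nat.mul_div_cancel_left L hT]
  omega

lemma Nat.sub_one_mod_add_one_modEq {x : ℕ} (E : ℕ) (hx : 1 ≤ x) : (x - 1) % E + 1 ≡ x [MOD E] := by
  simpa [Nat.sub_add_cancel hx] using (Nat.mod_modEq (x - 1) E).add_right 1

lemma Nat.sub_one_mod_add_one_eq_iff {x b E : ℕ} (hx : 1 ≤ x) (hb : b ∈ Icc 1 E) :
    (x - 1) % E + 1 = b ↔ b ≡ x [MOD E] := by
  rw [mem_Icc] at hb
  refine ⟨fun h => h ▸ Nat.sub_one_mod_add_one_modEq E hx, fun h => ?_⟩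
  have h' : (x - 1) % E + 1 ≡ b - 1 + 1 [MOD E] := by
    rw [Nat.sub_add_cancel hb.1]
    exact (Nat.sub_one_mod_add_one_modEq E hx).trans h.symm
  have := (Nat.ModEq.add_right_cancel' 1 h').eq_of_lt_of_lt (Nat.mod_lt _ (by omega)) (by omega)
  omega

def sPowRoot (s N : ℕ) : ℕ := Nat.findGreatest (fun l => l ^ s ∣ N) N

lemma sPowGcd_eq_sPowRoot_pow (s N : ℕ) : sPowGcd s N = sPowRoot s N ^ s := rfl

section sPowRoot

variable {s N : ℕ}

lemma sPowRoot_pow_dvd (hN : N ≠ 0) : sPowRoot s N ^ s ∣ N :=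
  Nat.findGreatest_spec (P := fun l => l ^ s ∣ N) (Nat.one_le_iff_ne_zero.2 hN) (by simp)

lemma le_sPowRoot (hs : s ≠ 0) (hN : N ≠ 0) {l : ℕ} (hl : l ^ s ∣ N) : l ≤ sPowRoot s N :=
  Nat.le_findGreatest ((Nat.le_self_pow hs l).trans (Nat.le_of_dvd (Nat.pos_of_ne_zero hN) hl)) hl

lemma sPowRoot_pos (hs : s ≠ 0) (hN : N ≠ 0) : 0 < sPowRoot s N :=
  le_sPowRoot hs hN (by simp)

lemma dvd_sPowRoot_iff (hs : s ≠ 0) (hN : N ≠ 0) {l : ℕ} : l ∣ sPowRoot s N ↔ l ^ s ∣ N := by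
  refine ⟨fun h => (pow_dvd_pow_of_dvd h s).trans (sPowRoot_pow_dvd hN), fun hl => ?_⟩
  have hl0 : l ≠ 0 := by rintro rfl; simp [hs, hN] at hl
  have hlcm : (l.lcm (sPowRoot s N)) ^ s ∣ N := by
    rw [← Nat.pow_lcm_pow]
    exact Nat.lcm_dvd hl (sPowRoot_pow_dvd hN)
  have hroot : l.lcm (sPowRoot s N) = sPowRoot s N :=
    le_antisymm (le_sPowRoot hs hN hlcm)
      (Nat.le_of_dvd (Nat.lcm_pos (Nat.pos_of_ne_zero hl0) (sPowRoot_pos hs hN))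
        (Nat.dvd_lcm_right _ _))
  exact hroot ▸ Nat.dvd_lcm_left _ _

lemma sPowGcd_eq_one_iff (hs : s ≠ 0) (hN : N ≠ 0) :
    sPowGcd s N = 1 ↔ ∀ l, l ^ s ∣ N → l = 1 := by
  simp_rw [sPowGcd_eq_sPowRoot_pow, pow_eq_one_iff_left hs, ← dvd_sPowRoot_iff hs hN]
  exact ⟨fun h l hl => Nat.dvd_one.1 (h ▸ hl), fun h => h _ dvd_rfl⟩

lemma sPowGcd_eq_one_of_dvd (hs : s ≠ 0) {M : ℕ} (hM : M ≠ 0) (hNM : N ∣ M)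
    (h : sPowGcd s M = 1) : sPowGcd s N = 1 := by
  have hN : N ≠ 0 := by rintro rfl; exact hM (zero_dvd_iff.1 hNM)
  rw [sPowGcd_eq_one_iff hs hN]
  exact fun l hl => (sPowGcd_eq_one_iff hs hM).1 h l (hl.trans hNM)

lemma divisors_sPowRoot_gcd (hs : s ≠ 0) {n : ℕ} (hn : n ≠ 0) (G : ℕ) :
    (sPowRoot s (G.gcd (n ^ s))).divisors = {e ∈ n.divisors | e ^ s ∣ G} := by
  have hN : G.gcd (n ^ s) ≠ 0 := Nat.gcd_ne_zero_right (pow_ne_zero s hn)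
  ext e
  simp [Nat.mem_divisors, dvd_sPowRoot_iff hs hN, Nat.dvd_gcd_iff, Nat.pow_dvd_pow_iff hs,
    (sPowRoot_pos hs hN).ne', hn, and_comm]

end sPowRoot

lemma sum_divisors_moebius (n : ℕ) : ∑ d ∈ n.divisors, (μ d : ℤ) = if n = 1 then 1 else 0 := by
  rw [← coe_mul_zeta_apply, moebius_mul_coe_zeta, one_apply]

def sReducedResidues (s N : ℕ) : Finset ℕ := {m ∈ Icc 1 N | sPowGcd s (m.gcd N) = 1}

lemma klee_eq_card (s N : ℕ) : klee s N = #(sReducedResidues s N) := rfl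

lemma klee_pos {s N : ℕ} (hs : s ≠ 0) (hN : N ≠ 0) : 0 < klee s N := by
  refine card_pos.2 ⟨1, mem_filter.2 ⟨mem_Icc.2 ⟨le_rfl, Nat.one_le_iff_ne_zero.2 hN⟩, ?_⟩⟩
  rw [Nat.gcd_one_left, sPowGcd_eq_one_iff hs one_ne_zero]
  exact fun l hl => (pow_eq_one_iff_left hs).1 (Nat.dvd_one.1 hl)

section Moebius

variable {s n : ℕ}

lemma sum_moebius_filter_pow_dvd (hs : s ≠ 0) (hn : n ≠ 0) (x : ℕ) :
    ∑ d ∈ n.divisors with d ^ s ∣ x, (μ d : ℤ) =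
      if sPowGcd s (x.gcd (n ^ s)) = 1 then 1 else 0 := by
  simp only [← divisors_sPowRoot_gcd hs hn, sum_divisors_moebius, sPowGcd_eq_sPowRoot_pow,
    pow_eq_one_iff_left hs]

lemma card_filter_sReducedResidues (hs : s ≠ 0) (hn : n ≠ 0) (P : ℕ → Prop) [DecidablePred P] :
    (#{x ∈ sReducedResidues s (n ^ s) | P x} : ℤ) =
      ∑ d ∈ n.divisors, μ d * #{x ∈ Icc 1 (n ^ s) | d ^ s ∣ x ∧ P x} := by
  rw [sReducedResidues, filter_comm, card_filter, Nat.cast_sum]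
  simp_rw [Nat.cast_ite, Nat.cast_one, Nat.cast_zero, ← sum_moebius_filter_pow_dvd hs hn]
  rw [sum_comm' (t' := n.divisors) (s' := fun d => {x ∈ Icc 1 (n ^ s) | d ^ s ∣ x ∧ P x})
    (by intro x d; simp only [mem_filter]; tauto)]
  simp [mul_comm]

lemma klee_pow_eq_sum_moebius (hs : s ≠ 0) (hn : n ≠ 0) :
    (klee s (n ^ s) : ℤ) = ∑ d ∈ n.divisors, μ d * (n / d : ℕ) ^ s := by
  have h := card_filter_sReducedResidues hs hn (fun _ => True)
  simp only [and_true, filter_true, ← klee_eq_card] at h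
  rw [h]
  refine sum_congr rfl fun d hd => ?_
  have hdn := Nat.dvd_of_mem_divisors hd
  have hcount := card_filter_Icc_dvd_sub (pow_pos (Nat.pos_of_mem_divisors hd) s)
    (pow_dvd_pow_of_dvd hdn s) 0
  simp only [sub_zero, Int.natCast_dvd_natCast] at hcount
  rw [hcount, ← Nat.div_pow hdn]
  push_cast
  rfl

end Moebius

lemma sum_divisors_klee_pow {s : ℕ} (hs : s ≠ 0) {D : ℕ} (hD : 0 < D) :
    ∑ e ∈ D.divisors, (klee s (e ^ s) : ℤ) = D ^ s := by
  refine (sum_eq_iff_sum_mul_moebius_eq (f := fun e => (klee s (e ^ s) : ℤ))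
    (g := fun D => (D : ℤ) ^ s)).2 (fun n hn => ?_) D hD
  rw [klee_pow_eq_sum_moebius hs hn.ne', ← Nat.sum_divisorsAntidiagonal
    (fun a b => (μ a : ℤ) * ((b : ℤ) ^ s))]
  push_cast
  rfl

lemma sPowGcd_gcd_eq_sum_klee {s n : ℕ} (hs : s ≠ 0) (hn : n ≠ 0) (G : ℕ) :
    (sPowGcd s (G.gcd (n ^ s)) : ℤ) = ∑ e ∈ n.divisors with e ^ s ∣ G, (klee s (e ^ s) : ℤ) := by
  rw [← divisors_sPowRoot_gcd hs hn, sum_divisors_klee_pow hs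
    (sPowRoot_pos hs (Nat.gcd_ne_zero_right (pow_ne_zero s hn))), sPowGcd_eq_sPowRoot_pow]
  push_cast
  rfl

lemma sPowGcd_gcd_natAbs_eq_sum_klee {s n k : ℕ} (hs : s ≠ 0) (hn : n ≠ 0) (f : Fin k → ℤ) :
    (sPowGcd s ((univ.gcd fun i => (f i).natAbs).gcd (n ^ s)) : ℚ) =
      ∑ e ∈ n.divisors with ∀ i, ((e : ℕ) : ℤ) ^ s ∣ f i, (klee s (e ^ s) : ℚ) := by
  have h := sPowGcd_gcd_eq_sum_klee hs hn (univ.gcd fun i => (f i).natAbs)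
  simp only [Finset.dvd_gcd_natAbs_iff, mem_univ, true_implies, Nat.cast_pow] at h
  exact_mod_cast h

section Equidistribution

variable {s n e : ℕ}

lemma sPowGcd_gcd_pow_eq_one_of_dvd (hs : s ≠ 0) (hn : n ≠ 0) (he : e ∣ n) {b : ℤ}
    (hb : sPowGcd s (b.gcd ((n : ℤ) ^ s)) = 1) : sPowGcd s (b.gcd ((e : ℤ) ^ s)) = 1 :=
  sPowGcd_eq_one_of_dvd hs (by simp [Int.gcd_eq_zero_iff, hn])
    (Int.gcd_dvd_gcd_of_dvd_right _ (pow_dvd_pow_of_dvd (Int.natCast_dvd_natCast.2 he) s)) hb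

lemma card_filter_pow_dvd_and_dvd_sub (hs : s ≠ 0) (hn : n ≠ 0) {d : ℕ} (hd : d ∣ n)
    (he : e ∣ n) {b : ℤ} (hb : sPowGcd s (b.gcd ((e : ℤ) ^ s)) = 1) :
    #{x ∈ Icc 1 (n ^ s) | d ^ s ∣ x ∧ (e : ℤ) ^ s ∣ ↑x - b} =
      if d.Coprime e then n ^ s / (d * e) ^ s else 0 := by
  split_ifs with hde
  · have hden : d * e ∣ n := hde.mul_dvd_of_dvd_of_dvd hd he
    obtain ⟨c, hc⟩ :=
      ((Nat.isCoprime_iff_coprime.2 hde).pow (m := s) (n := s)).exists_dvd_and_dvd_sub_iff b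
    rw [← card_filter_Icc_dvd_sub (pow_pos (Nat.pos_of_dvd_of_pos hden (Nat.pos_of_ne_zero hn)) s)
      (pow_dvd_pow_of_dvd hden s) c]
    refine congrArg card (filter_congr fun x _ => ?_)
    rw [← Int.natCast_dvd_natCast]
    push_cast
    rw [hc, mul_pow]
  · refine card_eq_zero.2 (filter_eq_empty_iff.2 fun x _ ⟨hdx, hex⟩ => hde ?_)
    -- a common factor `g` of `d` and `e` would give `g ^ s ∣ b`
    have hgx : ((d.gcd e : ℕ) : ℤ) ^ s ∣ x := by
      exact_mod_cast (pow_dvd_pow_of_dvd (Nat.gcd_dvd_left d e) s).trans hdx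
    have hge : ((d.gcd e : ℕ) : ℤ) ^ s ∣ (e : ℤ) ^ s :=
      pow_dvd_pow_of_dvd (Int.natCast_dvd_natCast.2 (Nat.gcd_dvd_right d e)) s
    have hgb : ((d.gcd e : ℕ) : ℤ) ^ s ∣ b := by
      simpa using dvd_sub hgx (hge.trans hex)
    have hN : b.gcd ((e : ℤ) ^ s) ≠ 0 := by
      simp [Int.gcd_eq_zero_iff, (Nat.pos_of_dvd_of_pos he (Nat.pos_of_ne_zero hn)).ne']
    refine (sPowGcd_eq_one_iff hs hN).1 hb _ (Int.dvd_gcd ?_ ?_) <;> push_cast <;> assumption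

lemma card_filter_dvd_sub_eq_sum_moebius (hs : s ≠ 0) (hn : n ≠ 0) (he : e ∣ n) {b : ℤ}
    (hb : sPowGcd s (b.gcd ((e : ℤ) ^ s)) = 1) :
    (#{x ∈ sReducedResidues s (n ^ s) | (e : ℤ) ^ s ∣ ↑x - b} : ℤ) =
      ∑ d ∈ n.divisors, μ d * if d.Coprime e then ((n ^ s / (d * e) ^ s : ℕ) : ℤ) else 0 := by
  rw [card_filter_sReducedResidues hs hn]
  refine sum_congr rfl fun d hd => ?_
  rw [card_filter_pow_dvd_and_dvd_sub hs hn (Nat.dvd_of_mem_divisors hd) he hb]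
  push_cast
  rfl

lemma klee_eq_sum_card_filter_dvd_sub (hs : s ≠ 0) {N E : ℕ} (hN : N ≠ 0) (hEN : E ∣ N) :
    klee s N = ∑ b ∈ sReducedResidues s E, #{x ∈ sReducedResidues s N | (E : ℤ) ∣ ↑x - b} := by
  have hmaps : Set.MapsTo (fun x => (x - 1) % E + 1) (sReducedResidues s N)
      (sReducedResidues s E) := by
    intro x hx
    simp only [sReducedResidues, coe_filter, mem_Icc] at hx ⊢
    have hE : 0 < E := Nat.pos_of_dvd_of_pos hEN (Nat.pos_of_ne_zero hN)
    refine ⟨⟨by omega, by have := Nat.mod_lt (x - 1) hE; omega⟩, ?_⟩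
    rw [(Nat.sub_one_mod_add_one_modEq E hx.1.1).gcd_eq]
    exact sPowGcd_eq_one_of_dvd hs (Nat.gcd_ne_zero_right hN)
      (Nat.gcd_dvd_gcd_of_dvd_right x hEN) hx.2
  rw [klee_eq_card, card_eq_sum_card_fiberwise hmaps]
  refine sum_congr rfl fun b hb => congrArg card (filter_congr fun x hx => ?_)
  rw [Nat.sub_one_mod_add_one_eq_iff (mem_Icc.1 (mem_filter.1 hx).1).1 (mem_filter.1 hb).1,
    Nat.modEq_iff_dvd]

lemma card_filter_dvd_sub_mul_klee (hs : s ≠ 0) (hn : n ≠ 0) (he : e ∣ n) {b : ℤ}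
    (hb : sPowGcd s (b.gcd ((e : ℤ) ^ s)) = 1) :
    #{x ∈ sReducedResidues s (n ^ s) | (e : ℤ) ^ s ∣ ↑x - b} * klee s (e ^ s) = klee s (n ^ s) := by
  have hindep : ∀ b' ∈ sReducedResidues s (e ^ s),
      #{x ∈ sReducedResidues s (n ^ s) | ((e ^ s : ℕ) : ℤ) ∣ ↑x - ↑b'} =
        #{x ∈ sReducedResidues s (n ^ s) | (e : ℤ) ^ s ∣ ↑x - b} := by
    intro b' hb'
    have hb'' : sPowGcd s ((b' : ℤ).gcd ((e : ℤ) ^ s)) = 1 := by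
      rw [← Nat.cast_pow, Int.gcd_natCast_natCast]
      exact (mem_filter.1 hb').2
    push_cast
    exact_mod_cast (card_filter_dvd_sub_eq_sum_moebius hs hn he hb'').trans
      (card_filter_dvd_sub_eq_sum_moebius hs hn he hb).symm
  rw [klee_eq_sum_card_filter_dvd_sub hs (pow_ne_zero s hn) (pow_dvd_pow_of_dvd he s),
    sum_congr rfl hindep, sum_const, smul_eq_mul, klee_eq_card, mul_comm]

lemma card_filter_piFinset_dvd_sub (hs : s ≠ 0) (hn : n ≠ 0) (he : e ∣ n) {k : ℕ}
    (a : Fin k → ℤ) (ha : ∀ i, sPowGcd s ((a i).gcd ((n : ℤ) ^ s)) = 1) :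
    (#{m ∈ Fintype.piFinset fun _ : Fin k => sReducedResidues s (n ^ s) |
        ∀ i, (e : ℤ) ^ s ∣ ↑(m i) - a i} : ℚ) =
      ((klee s (n ^ s) : ℚ) / klee s (e ^ s)) ^ k := by
  have hKe : (klee s (e ^ s) : ℚ) ≠ 0 :=
    Nat.cast_ne_zero.2 (klee_pos hs (pow_ne_zero s (ne_zero_of_dvd_ne_zero hn he))).ne'
  have hcard (i : Fin k) : (#{x ∈ sReducedResidues s (n ^ s) | (e : ℤ) ^ s ∣ ↑x - a i} : ℚ) =
      klee s (n ^ s) / klee s (e ^ s) := by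
    rw [eq_div_iff hKe]
    exact_mod_cast card_filter_dvd_sub_mul_klee hs hn he
      (sPowGcd_gcd_pow_eq_one_of_dvd hs hn he (ha i))
  rw [Fintype.filter_piFinset_forall _ fun i (x : ℕ) => (e : ℤ) ^ s ∣ ↑x - a i,
    Fintype.card_piFinset, Nat.cast_prod, prod_congr rfl fun i _ => hcard i, prod_const,
    card_univ, Fintype.card_fin]

end Equidistribution

theorem stmt_5 (k n s : ℕ) (hk : 0 < k) (hn : 0 < n) (hs : 0 < s)
    (a : Fin k → ℤ) (ha : ∀ i, sPowGcd s (Int.gcd (a i) ((n : ℤ) ^ s)) = 1) :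
    (∑ m ∈ (Fintype.piFinset fun _ : Fin k => Finset.Icc 1 (n ^ s)).filter
        (fun m => ∀ i, sPowGcd s (Nat.gcd (m i) (n ^ s)) = 1),
      (sPowGcd s
        (Nat.gcd (Finset.univ.gcd fun i => ((m i : ℤ) - a i).natAbs) (n ^ s)) : ℚ))
    = (klee s (n ^ s) : ℚ) ^ k *
        ∑ d ∈ n.divisors, 1 / (klee s (d ^ s) : ℚ) ^ (k - 1) := by
  obtain ⟨j, rfl⟩ : ∃ j, k = j + 1 := ⟨k - 1, by omega⟩
  rw [Fintype.filter_piFinset_forall _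
    fun (_ : Fin (j + 1)) (x : ℕ) => sPowGcd s (x.gcd (n ^ s)) = 1]
  calc _ = ∑ m ∈ Fintype.piFinset fun _ => sReducedResidues s (n ^ s),
        ∑ e ∈ n.divisors with ∀ i, ((e : ℕ) : ℤ) ^ s ∣ ↑(m i) - a i, (klee s (e ^ s) : ℚ) :=
        sum_congr rfl fun m _ =>
          sPowGcd_gcd_natAbs_eq_sum_klee hs.ne' hn.ne' fun i => (m i : ℤ) - a i
    _ = ∑ e ∈ n.divisors, ∑ m ∈ Fintype.piFinset fun _ => sReducedResidues s (n ^ s)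
        with ∀ i, ((e : ℕ) : ℤ) ^ s ∣ ↑(m i) - a i, (klee s (e ^ s) : ℚ) :=
        sum_comm' (by intro m e; simp only [mem_filter]; tauto)
    _ = _ := by
      rw [mul_sum]
      refine sum_congr rfl fun e he => ?_
      have hKe : (klee s (e ^ s) : ℚ) ≠ 0 :=
        Nat.cast_ne_zero.2 (klee_pos hs.ne' (pow_ne_zero s (Nat.pos_of_mem_divisors he).ne')).ne'
      rw [sum_const, nsmul_eq_mul, card_filter_piFinset_dvd_sub hs.ne' hn.ne'
        (Nat.dvd_of_mem_divisors he) a ha, add_tsub_cancel_right, div_pow,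
        pow_succ (klee s (e ^ s) : ℚ) j]
      field_simp
end

section
/- Let s be a positive integer and let n = 2^s · a where a is an odd positive integer that is s-free. Then Φ_s(n) is odd. -/
/-- `a` is `s`-free: no `s`-th power `l ^ s` with `l > 1` divides `a`. -/
def sFree (s a : ℕ) : Prop := ∀ l : ℕ, 1 < l → ¬ l ^ s ∣ a

/-!
Since `a` is `s`-free, the only `s`-th power that can divide `gcd(m, 2 ^ s * a)` is a power of 2,
so `(m, 2 ^ s * a)_s = 1` exactly when `2 ^ s ∤ m`. Hence `Φ_s(2 ^ s * a) = 2 ^ s * a - a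
= (2 ^ s - 1) * a`, a product of two odd numbers.
-/

open Finset

lemma sFree_iff_forall_prime {s g : ℕ} : sFree s g ↔ ∀ q, q.Prime → ¬ q ^ s ∣ g := by
  refine ⟨fun h q hq => h q hq.one_lt, fun h l hl hdvd => ?_⟩
  obtain ⟨q, hq, hql⟩ := Nat.exists_prime_and_dvd hl.ne'
  exact h q hq ((pow_dvd_pow_of_dvd hql s).trans hdvd)

lemma sPowGcd_eq_one_iff_s15 {s g : ℕ} (hs : 0 < s) (hg : 0 < g) :
    sPowGcd s g = 1 ↔ sFree s g := by
  rw [sPowGcd, Nat.pow_eq_one, or_iff_left hs.ne', Nat.findGreatest_eq_iff]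
  simp only [one_pow, one_dvd, ne_eq, imp_true_iff, true_and,
    Nat.one_le_iff_ne_zero.2 hg.ne']
  -- `l ^ s ∣ g` already forces `l ≤ l ^ s ≤ g`, so the bound in `findGreatest` is harmless
  exact ⟨fun h l hl hdvd => h hl ((Nat.le_self_pow hs.ne' l).trans (Nat.le_of_dvd hg hdvd)) hdvd,
    fun h l hl _ => h l hl⟩

lemma sFree_gcd_prime_pow_mul_iff {s p a m : ℕ} (hp : p.Prime) (ha : sFree s a) :
    sFree s (Nat.gcd m (p ^ s * a)) ↔ ¬ p ^ s ∣ m := by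
  rw [sFree_iff_forall_prime]
  refine ⟨fun h hm => h p hp (Nat.dvd_gcd hm (dvd_mul_right _ _)), fun hm q hq hdvd => ?_⟩
  rcases eq_or_ne q p with rfl | hqp
  · exact hm (hdvd.trans (Nat.gcd_dvd_left _ _))
  · have hcop : Nat.Coprime (q ^ s) (p ^ s) :=
      Nat.Coprime.pow s s ((Nat.coprime_primes hq hp).2 hqp)
    exact sFree_iff_forall_prime.1 ha q hq
      (hcop.dvd_of_dvd_mul_left (hdvd.trans (Nat.gcd_dvd_right _ _)))

lemma card_Icc_filter_not_dvd (n d : ℕ) :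
    ((Icc 1 n).filter (fun m => ¬ d ∣ m)).card = n - n / d := by
  rw [filter_not, card_sdiff_of_subset (filter_subset _ _), Nat.card_Icc, Nat.add_sub_cancel]
  -- `Icc 1 n` and `Ioc 0 n` are definitionally equal on `ℕ`
  exact congrArg (n - ·) (Nat.Ioc_filter_dvd_card_eq_div n d)

lemma klee_prime_pow_mul {s p a : ℕ} (hs : 0 < s) (hp : p.Prime) (ha : sFree s a) :
    klee s (p ^ s * a) = (p ^ s - 1) * a := by
  have hcond : ∀ m ∈ Icc 1 (p ^ s * a),
      sPowGcd s (Nat.gcd m (p ^ s * a)) = 1 ↔ ¬ p ^ s ∣ m := fun m hm => by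
    rw [sPowGcd_eq_one_iff_s15 hs (Nat.gcd_pos_of_pos_left _ (mem_Icc.1 hm).1),
      sFree_gcd_prime_pow_mul_iff hp ha]
  rw [klee, filter_congr hcond, card_Icc_filter_not_dvd,
    Nat.mul_div_cancel_left _ (pow_pos hp.pos s), Nat.sub_one_mul]

theorem stmt_15_general (s a : ℕ) (hs : 0 < s) (haodd : Odd a) (hafree : sFree s a) :
    Odd (klee s (2 ^ s * a)) := by
  rw [klee_prime_pow_mul hs Nat.prime_two hafree]
  have hodd : Odd (2 ^ s - 1) :=
    Nat.Even.sub_odd Nat.one_le_two_pow ((Nat.even_pow' hs.ne').2 even_two) odd_one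
  exact hodd.mul haodd

theorem stmt_15 (s a : ℕ) (hs : 0 < s) (ha : 0 < a) (haodd : Odd a) (hafree : sFree s a) :
    Odd (klee s (2 ^ s * a)) :=
  stmt_15_general s a hs haodd hafree
end
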